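/- With the groupwise restricted eigenvalue RE(ξ,ω,T,T) = inf{‖Xu‖₂/(√n ‖u_{G_T}‖₂) : u ∈ C(ξ,ω,T)}, compatibility constant CC(ξ,ω,T) = inf{‖Xu‖₂(Σ_{j∈T}ω_j²)^{1/2}/(√n Σ_{j∈T}ω_j‖u_{G_j}‖₂) : u ∈ C(ξ,ω,T)}, and sign-restricted cone invertibility factor SCIF₁(ξ,ω,T,T) = inf{max_j[ω_j^{−1}‖X_{G_j}^T X u‖₂](Σ_{j∈T}ω_j²)/(n Σ_{j∈T}ω_j‖u_{G_j}‖₂) : u ∈ C_−(ξ,ω,T)}, one has RE(ξ,ω,T,T)² ≤ CC(ξ,ω,T)² ≤ SCIF₁(ξ,ω,T,T). -/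
import Mathlib


open Matrix

/-- Groupwise ℓ₂ norm: the ℓ₂ norm of the restriction of `v` to the coordinate set `s`. -/
noncomputable def gnorm {p : ℕ} (v : Fin p → ℝ) (s : Finset (Fin p)) : ℝ :=
  Real.sqrt (∑ i ∈ s, v i ^ 2)

/-- Euclidean (ℓ₂) norm of a vector. -/
noncomputable def nrm2 {n : ℕ} (v : Fin n → ℝ) : ℝ :=
  Real.sqrt (∑ i, v i ^ 2)

/-- Membership in the group cone `C(ξ,ω,T)`. -/
def ConeMem {p M : ℕ} (G : Fin M → Finset (Fin p)) (ω : Fin M → ℝ)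
    (T : Finset (Fin M)) (ξ : ℝ) (u : Fin p → ℝ) : Prop :=
  ∑ j ∈ Tᶜ, ω j * gnorm u (G j) ≤ ξ * ∑ j ∈ T, ω j * gnorm u (G j) ∧
    ∑ j ∈ T, ω j * gnorm u (G j) ≠ 0

/-- Membership in the sign-restricted group cone `C₋(ξ,ω,T)`. -/
def SignConeMem {n p M : ℕ} (X : Matrix (Fin n) (Fin p) ℝ)
    (G : Fin M → Finset (Fin p)) (ω : Fin M → ℝ)
    (T : Finset (Fin M)) (ξ : ℝ) (u : Fin p → ℝ) : Prop :=
  ConeMem G ω T ξ u ∧ ∀ j ∉ T, ∑ i ∈ G j, u i * (Xᵀ *ᵥ (X *ᵥ u)) i ≤ 0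

lemma gnorm_nonneg' {p : ℕ} (v : Fin p → ℝ) (s : Finset (Fin p)) : 0 ≤ gnorm v s :=
  Real.sqrt_nonneg _

lemma gnorm_sq' {p : ℕ} (v : Fin p → ℝ) (s : Finset (Fin p)) :
    gnorm v s ^ 2 = ∑ i ∈ s, v i ^ 2 :=
  Real.sq_sqrt (Finset.sum_nonneg fun _ _ => sq_nonneg _)

/-- Cauchy–Schwarz with square roots. -/
lemma cs_sqrt {ι : Type*} (s : Finset ι) (a b : ι → ℝ) :
    ∑ i ∈ s, a i * b i ≤ Real.sqrt (∑ i ∈ s, a i ^ 2) * Real.sqrt (∑ i ∈ s, b i ^ 2) := by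
  have h := Finset.sum_mul_sq_le_sq_mul_sq s a b
  calc ∑ i ∈ s, a i * b i ≤ |∑ i ∈ s, a i * b i| := le_abs_self _
    _ = Real.sqrt ((∑ i ∈ s, a i * b i) ^ 2) := (Real.sqrt_sq_eq_abs _).symm
    _ ≤ Real.sqrt ((∑ i ∈ s, a i ^ 2) * ∑ i ∈ s, b i ^ 2) := Real.sqrt_le_sqrt h
    _ = _ := Real.sqrt_mul (Finset.sum_nonneg fun _ _ => sq_nonneg _) _

lemma part_disj' {p M : ℕ} {G : Fin M → Finset (Fin p)} (hpart : ∀ i, ∃! j, i ∈ G j)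
    (s : Finset (Fin M)) : (s : Set (Fin M)).PairwiseDisjoint G := by
  intro j _ k _ hjk
  rw [Function.onFun, Finset.disjoint_left]
  intro i hij hik
  exact hjk ((hpart i).unique hij hik)

lemma sum_univ_groups' {p M : ℕ} {G : Fin M → Finset (Fin p)} (hpart : ∀ i, ∃! j, i ∈ G j)
    (f : Fin p → ℝ) : ∑ i, f i = ∑ j, ∑ i ∈ G j, f i := by
  rw [← Finset.sum_biUnion (part_disj' hpart Finset.univ)]
  apply Finset.sum_congr _ fun _ _ => rfl
  ext i
  simp only [Finset.mem_biUnion, Finset.mem_univ, true_and]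
  exact iff_of_true trivial (hpart i).exists

/-- `RE(ξ,ω,T,T)² ≤ CC(ξ,ω,T)² ≤ SCIF₁(ξ,ω,T,T)`, where the three
quantities are the groupwise restricted eigenvalue, compatibility constant and
sign-restricted cone invertibility factor, expressed as infima over the (nonempty)
cones. -/
theorem stmt12 {n p M : ℕ} (hn : 0 < n) (X : Matrix (Fin n) (Fin p) ℝ)
    (G : Fin M → Finset (Fin p)) (hpart : ∀ i : Fin p, ∃! j, i ∈ G j)
    (ω : Fin M → ℝ) (hω : ∀ j, 0 < ω j)
    (T : Finset (Fin M)) (ξ : ℝ) (hξ : 0 ≤ ξ)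
    (hne : ∃ u, SignConeMem X G ω T ξ u) :
    sInf {r : ℝ | ∃ u, ConeMem G ω T ξ u ∧
          r = nrm2 (X *ᵥ u) / (Real.sqrt n * gnorm u (T.biUnion G))} ^ 2
        ≤ sInf {r : ℝ | ∃ u, ConeMem G ω T ξ u ∧
          r = nrm2 (X *ᵥ u) * Real.sqrt (∑ j ∈ T, ω j ^ 2)
            / (Real.sqrt n * ∑ j ∈ T, ω j * gnorm u (G j))} ^ 2 ∧
      sInf {r : ℝ | ∃ u, ConeMem G ω T ξ u ∧
          r = nrm2 (X *ᵥ u) * Real.sqrt (∑ j ∈ T, ω j ^ 2)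
            / (Real.sqrt n * ∑ j ∈ T, ω j * gnorm u (G j))} ^ 2
        ≤ sInf {r : ℝ | ∃ u, SignConeMem X G ω T ξ u ∧
          r = (⨆ j, (ω j)⁻¹ * gnorm (Xᵀ *ᵥ (X *ᵥ u)) (G j)) * (∑ j ∈ T, ω j ^ 2)
            / (n * ∑ j ∈ T, ω j * gnorm u (G j))} := by
  obtain ⟨u₀, hu₀⟩ := hne
  set S : ℝ := ∑ j ∈ T, ω j ^ 2 with hSdef
  set A := {r : ℝ | ∃ u, ConeMem G ω T ξ u ∧
      r = nrm2 (X *ᵥ u) / (Real.sqrt n * gnorm u (T.biUnion G))} with hAdef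
  set B := {r : ℝ | ∃ u, ConeMem G ω T ξ u ∧
      r = nrm2 (X *ᵥ u) * Real.sqrt S
        / (Real.sqrt n * ∑ j ∈ T, ω j * gnorm u (G j))} with hBdef
  set D := {r : ℝ | ∃ u, SignConeMem X G ω T ξ u ∧
      r = (⨆ j, (ω j)⁻¹ * gnorm (Xᵀ *ᵥ (X *ᵥ u)) (G j)) * S
        / (n * ∑ j ∈ T, ω j * gnorm u (G j))} with hDdef
  -- basic positivity facts
  have hTne : T.Nonempty := by
    rcases Finset.eq_empty_or_nonempty T with h | h
    · exact absurd (by simp [h]) hu₀.1.2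
    · exact h
  have hSpos : 0 < S := Finset.sum_pos (fun j _ => pow_pos (hω j) 2) hTne
  have hnR : (0:ℝ) < (n:ℝ) := by exact_mod_cast hn
  have hsn : (0:ℝ) < Real.sqrt n := Real.sqrt_pos.2 hnR
  have hsS : (0:ℝ) < Real.sqrt S := Real.sqrt_pos.2 hSpos
  have hW : ∀ u, ConeMem G ω T ξ u → 0 < ∑ j ∈ T, ω j * gnorm u (G j) := fun u hu =>
    lt_of_le_of_ne
      (Finset.sum_nonneg fun j _ => mul_nonneg (hω j).le (gnorm_nonneg' _ _)) (Ne.symm hu.2)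
  have hN0 : ∀ v : Fin n → ℝ, 0 ≤ nrm2 v := fun _ => Real.sqrt_nonneg _
  -- grouped Cauchy–Schwarz
  have hCS : ∀ u : Fin p → ℝ,
      ∑ j ∈ T, ω j * gnorm u (G j) ≤ Real.sqrt S * gnorm u (T.biUnion G) := by
    intro u
    have h1 : ∑ j ∈ T, gnorm u (G j) ^ 2 = ∑ i ∈ T.biUnion G, u i ^ 2 := by
      rw [Finset.sum_biUnion (part_disj' hpart T)]
      exact Finset.sum_congr rfl fun j _ => gnorm_sq' u (G j)
    have h2 := cs_sqrt T (fun j => ω j) (fun j => gnorm u (G j))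
    rw [h1] at h2
    exact h2
  have hg : ∀ u, ConeMem G ω T ξ u → 0 < gnorm u (T.biUnion G) := by
    intro u hu
    have h1 := lt_of_lt_of_le (hW u hu) (hCS u)
    nlinarith [gnorm_nonneg' u (T.biUnion G), hsS]
  -- nonnegativity of the sets
  have hAnn : ∀ r ∈ A, (0:ℝ) ≤ r := by
    rintro r ⟨u, hu, rfl⟩
    exact div_nonneg (hN0 _) (mul_nonneg hsn.le (gnorm_nonneg' _ _))
  have hBnn : ∀ r ∈ B, (0:ℝ) ≤ r := by
    rintro r ⟨u, hu, rfl⟩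
    exact div_nonneg (mul_nonneg (hN0 _) hsS.le) (mul_nonneg hsn.le (hW u hu).le)
  have hAbdd : BddBelow A := ⟨0, hAnn⟩
  have hBbdd : BddBelow B := ⟨0, hBnn⟩
  have hBne : B.Nonempty := ⟨_, u₀, hu₀.1, rfl⟩
  have hDne : D.Nonempty := ⟨_, u₀, hu₀, rfl⟩
  have hA0 : 0 ≤ sInf A := Real.sInf_nonneg hAnn
  have hB0 : 0 ≤ sInf B := Real.sInf_nonneg hBnn
  -- first inequality
  have h1 : sInf A ≤ sInf B := by
    apply le_csInf hBne
    rintro b ⟨u, hu, rfl⟩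
    have ha : (nrm2 (X *ᵥ u) / (Real.sqrt n * gnorm u (T.biUnion G))) ∈ A := ⟨u, hu, rfl⟩
    refine (csInf_le hAbdd ha).trans ?_
    rw [div_le_div_iff₀ (mul_pos hsn (hg u hu)) (mul_pos hsn (hW u hu))]
    have hkey := mul_le_mul_of_nonneg_left (hCS u)
      (mul_nonneg (hN0 (X *ᵥ u)) hsn.le)
    nlinarith [hkey]
  refine ⟨pow_le_pow_left₀ hA0 h1 2, ?_⟩
  -- second inequality
  apply le_csInf hDne
  rintro d ⟨u, hu, rfl⟩
  have hWu := hW u hu.1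
  set w := Xᵀ *ᵥ (X *ᵥ u) with hwdef
  set s := ⨆ j, (ω j)⁻¹ * gnorm w (G j) with hsdef
  set Nu := nrm2 (X *ᵥ u) with hNdef
  set Wu := ∑ j ∈ T, ω j * gnorm u (G j) with hWdef
  -- key inequality: Nu^2 ≤ s * Wu
  have hkey : Nu ^ 2 ≤ s * Wu := by
    have hsq : Nu ^ 2 = ∑ i, (X *ᵥ u) i ^ 2 :=
      Real.sq_sqrt (Finset.sum_nonneg fun _ _ => sq_nonneg _)
    have hid : ∑ i, (X *ᵥ u) i ^ 2 = ∑ i : Fin p, u i * w i := by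
      have h3 : ∑ i : Fin p, u i * w i = u ⬝ᵥ (Xᵀ *ᵥ (X *ᵥ u)) := rfl
      rw [h3, Matrix.dotProduct_mulVec, Matrix.vecMul_transpose]
      simp [dotProduct, sq]
    have hsplit : ∑ i : Fin p, u i * w i = ∑ j, ∑ i ∈ G j, u i * w i :=
      sum_univ_groups' hpart _
    have hcompl : ∑ j ∈ Tᶜ, ∑ i ∈ G j, u i * w i ≤ 0 :=
      Finset.sum_nonpos fun j hj => hu.2 j (Finset.mem_compl.mp hj)
    have hMne : Nonempty (Fin M) := ⟨hTne.choose⟩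
    have hbdd : BddAbove (Set.range fun j => (ω j)⁻¹ * gnorm w (G j)) :=
      Set.Finite.bddAbove (Set.finite_range _)
    have hgw : ∀ j, gnorm w (G j) ≤ ω j * s := by
      intro j
      have h4 : (ω j)⁻¹ * gnorm w (G j) ≤ s := le_ciSup hbdd j
      have h5 := mul_le_mul_of_nonneg_left h4 (hω j).le
      rwa [← mul_assoc, mul_inv_cancel₀ (hω j).ne', one_mul] at h5
    have hTsum : ∑ j ∈ T, ∑ i ∈ G j, u i * w i ≤ s * Wu := by
      calc ∑ j ∈ T, ∑ i ∈ G j, u i * w i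
          ≤ ∑ j ∈ T, gnorm u (G j) * (ω j * s) := by
            refine Finset.sum_le_sum fun j _ => ?_
            calc ∑ i ∈ G j, u i * w i
                ≤ Real.sqrt (∑ i ∈ G j, u i ^ 2) * Real.sqrt (∑ i ∈ G j, w i ^ 2) :=
                  cs_sqrt (G j) u w
              _ = gnorm u (G j) * gnorm w (G j) := rfl
              _ ≤ gnorm u (G j) * (ω j * s) :=
                  mul_le_mul_of_nonneg_left (hgw j) (gnorm_nonneg' _ _)
        _ = s * Wu := by
            rw [hWdef, Finset.mul_sum]
            exact Finset.sum_congr rfl fun j _ => by ring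
    have htot : ∑ j, ∑ i ∈ G j, u i * w i
        = ∑ j ∈ T, ∑ i ∈ G j, u i * w i + ∑ j ∈ Tᶜ, ∑ i ∈ G j, u i * w i :=
      (Finset.sum_add_sum_compl T _).symm
    rw [hsq, hid, hsplit, htot]
    linarith
  -- conclude: sInf B ^ 2 ≤ b(u)^2 ≤ d
  have hb : (Nu * Real.sqrt S / (Real.sqrt n * Wu)) ∈ B := ⟨u, hu.1, rfl⟩
  have hble : sInf B ≤ Nu * Real.sqrt S / (Real.sqrt n * Wu) := csInf_le hBbdd hb
  refine (pow_le_pow_left₀ hB0 hble 2).trans ?_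
  have hb2 : (Nu * Real.sqrt S / (Real.sqrt n * Wu)) ^ 2
      = Nu ^ 2 * S / (n * Wu ^ 2) := by
    rw [div_pow, mul_pow, mul_pow, Real.sq_sqrt hSpos.le, Real.sq_sqrt (Nat.cast_nonneg n)]
  rw [hb2, div_le_div_iff₀ (by positivity) (by positivity)]
  nlinarith [mul_le_mul_of_nonneg_right hkey (by positivity : (0:ℝ) ≤ S * n * Wu), sq_nonneg Wu]
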